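/- For every m ≥ 1, P_{X₊,ℓ_{2m-1}} = Σ₊^{2ℓ_{2m-1}-1} ∖ F_{2m-1} and P_{X₋,ℓ_{2m}} = Σ₋^{2ℓ_{2m}-1} ∖ F_{2m}: a string of length 2ℓ_{2m-1}-1 is locally admissible for X₊ if and only if it is a string over Σ₊ not belonging to F_{2m-1} (and symmetrically for X₋). -/

import Mathlib

/-- The three-letter alphabet `Σ = {-1, 0, +1}`. -/
inductive Letter : Type
  | neg : Letter
  | zero : Letter
  | pos : Letter
deriving DecidableEq

instance instFintypeLetter : Fintype Letter :=
  ⟨{Letter.neg, Letter.zero, Letter.pos}, fun x => by cases x <;> simp⟩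

/-- `f₀(ω)`: the frequency of the symbol `0` in the finite string `ω`. -/
noncomputable def f0 {n : ℕ} (ω : Fin n → Letter) : ℝ :=
  ((Finset.univ.filter fun i => ω i = Letter.zero).card : ℝ) / n

/-- The binary entropy `H(t) = -t log t - (1-t) log (1-t)` (with `0 log 0 = 0`). -/
noncomputable def H (t : ℝ) : ℝ := -(t * Real.log t) - (1 - t) * Real.log (1 - t)

/-- `η` occurs as a consecutive substring of `ω` starting at position `s`. -/
def occursAt {p n : ℕ} (η : Fin p → Letter) (ω : Fin n → Letter) (s : ℕ) : Prop :=
  ∃ _h : s + p ≤ n, ∀ i : Fin p, η i = ω ⟨s + i.val, by have := i.isLt; omega⟩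

/-- `η` occurs as a consecutive substring of `ω`. -/
def occursIn {p n : ℕ} (η : Fin p → Letter) (ω : Fin n → Letter) : Prop :=
  ∃ s, occursAt η ω s

/-- The symbol forbidden at level `k`: `-1` for odd `k`, `+1` for even `k`. -/
def bad (k : ℕ) : Letter := if k % 2 = 1 then Letter.neg else Letter.pos

/-- The forbidden sets `F_k` of the construction of Section 4: strings of length `2ℓ_k - 1`
containing the bad symbol, or over the good alphabet with frequency of zeros `≥ r_k`,
or over the good alphabet containing a forbidden string of an earlier level of the same parity. -/
def Forb (ℓ : ℕ → ℕ) (r : ℕ → ℚ) (k : ℕ) : Set (Fin (2 * ℓ k - 1) → Letter) :=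
  {ω | ∃ i, ω i = bad k} ∪
    {ω | (∀ i, ω i ≠ bad k) ∧ (r k : ℝ) ≤ f0 ω} ∪
    {ω | (∀ i, ω i ≠ bad k) ∧
      ∃ k' : Fin k, 1 ≤ k'.val ∧ k'.val % 2 = k % 2 ∧
        ∃ η ∈ Forb ℓ r k'.val, occursIn η ω}
termination_by k
decreasing_by exact k'.isLt

open Classical in
/-- The locally admissible strings of length `2n-1`:  no string from `⋃_{k' ≡ parity, k' ≥ 1} F_{k'}`
occurs as a consecutive substring.  `parity = 1` corresponds to `X₊`, `parity = 0` to `X₋`. -/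
noncomputable def Padm (ℓ : ℕ → ℕ) (r : ℕ → ℚ) (parity : ℕ) (n : ℕ) :
    Finset (Fin (2 * n - 1) → Letter) :=
  Finset.univ.filter fun ω =>
    ∀ k, 1 ≤ k → k % 2 = parity → ∀ η ∈ Forb ℓ r k, ¬ occursIn η ω

/-- `m_k = (2ℓ_k - 1)/(2ℓ_{k-1} - 1)`. -/
def mblk (ℓ : ℕ → ℕ) (k : ℕ) : ℕ := (2 * ℓ k - 1) / (2 * ℓ (k - 1) - 1)

open Classical in
/-- Strings of length `N` which are concatenations of `m` blocks of length `L`,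
the blocks at the even positions (`0`-based) taken from `B` and the blocks at odd
positions equal to the constant block `g^L`. -/
noncomputable def CfromB {L : ℕ} (N m : ℕ) (g : Letter) (B : Finset (Fin L → Letter)) :
    Finset (Fin N → Letter) :=
  Finset.univ.filter fun ω => ∀ j < m,
    if j % 2 = 0 then ∃ η ∈ B, occursAt η ω (j * L)
    else occursAt (fun _ : Fin L => g) ω (j * L)

/-- `B₊,k = P_{X₊,ℓ_k} ∖ {(+1)^{2ℓ_k-1}}`. -/
noncomputable def Bplus (ℓ : ℕ → ℕ) (r : ℕ → ℚ) (k : ℕ) :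
    Finset (Fin (2 * ℓ k - 1) → Letter) :=
  Padm ℓ r 1 (ℓ k) \ {fun _ => Letter.pos}

/-- `B₋,k = P_{X₋,ℓ_k} ∖ {(-1)^{2ℓ_k-1}}`. -/
noncomputable def Bminus (ℓ : ℕ → ℕ) (r : ℕ → ℚ) (k : ℕ) :
    Finset (Fin (2 * ℓ k - 1) → Letter) :=
  Padm ℓ r 0 (ℓ k) \ {fun _ => Letter.neg}

/-- `C₊,k`: alternating concatenations of blocks from `B₊,k-1` and constant `+1` blocks. -/
noncomputable def Cplus (ℓ : ℕ → ℕ) (r : ℕ → ℚ) (k : ℕ) :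
    Finset (Fin (2 * ℓ k - 1) → Letter) :=
  CfromB (2 * ℓ k - 1) (mblk ℓ k) Letter.pos (Bplus ℓ r (k - 1))

/-- `C₋,k`: alternating concatenations of blocks from `B₋,k-1` and constant `-1` blocks. -/
noncomputable def Cminus (ℓ : ℕ → ℕ) (r : ℕ → ℚ) (k : ℕ) :
    Finset (Fin (2 * ℓ k - 1) → Letter) :=
  CfromB (2 * ℓ k - 1) (mblk ℓ k) Letter.neg (Bminus ℓ r (k - 1))

/-- The subshift `X_k ⊆ Σ^ℤ`: bi-infinite sequences in which no string of `F_k` occurs. -/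
def Xk (ℓ : ℕ → ℕ) (r : ℕ → ℚ) (k : ℕ) : Set (ℤ → Letter) :=
  {x | ∀ η ∈ Forb ℓ r k, ∀ j : ℤ, ¬ (∀ i : Fin (2 * ℓ k - 1), η i = x (j + (i.val : ℤ)))}

/-- `X₊ = ⋂_{m ≥ 1} X_{2m-1}`. -/
def Xplus (ℓ : ℕ → ℕ) (r : ℕ → ℚ) : Set (ℤ → Letter) :=
  {x | ∀ m, 1 ≤ m → x ∈ Xk ℓ r (2 * m - 1)}

/-- `X₋ = ⋂_{m ≥ 1} X_{2m}`. -/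
def Xminus (ℓ : ℕ → ℕ) (r : ℕ → ℚ) : Set (ℤ → Letter) :=
  {x | ∀ m, 1 ≤ m → x ∈ Xk ℓ r (2 * m)}

namespace Forb

variable {ℓ : ℕ → ℕ} {r : ℕ → ℚ} {k : ℕ}

theorem forall_ne_bad_of_notMem {ω : Fin (2 * ℓ k - 1) → Letter} (h : ω ∉ Forb ℓ r k) :
    ∀ i, ω i ≠ bad k := by
  intro i hi
  rw [Forb] at h
  exact h (.inl (.inl ⟨i, hi⟩))

theorem mem_of_occursIn_lower {k' : ℕ} (hk' : 1 ≤ k') (hlt : k' < k) (hpar : k' % 2 = k % 2)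
    {η : Fin (2 * ℓ k' - 1) → Letter} (hη : η ∈ Forb ℓ r k')
    {ω : Fin (2 * ℓ k - 1) → Letter} (hω : ∀ i, ω i ≠ bad k) (hocc : occursIn η ω) :
    ω ∈ Forb ℓ r k := by
  rw [Forb]
  exact .inr ⟨hω, ⟨k', hlt⟩, hk', hpar, η, hη, hocc⟩

end Forb

theorem occursIn_self {n : ℕ} (ω : Fin n → Letter) : occursIn ω ω :=
  ⟨0, by omega, fun i => congrArg ω (Fin.ext (Nat.zero_add _).symm)⟩

theorem occursAt.eq {n s : ℕ} {η ω : Fin n → Letter} (h : occursAt η ω s) : η = ω := by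
  obtain ⟨hs, hocc⟩ := h
  funext i
  rw [hocc i]
  exact congrArg ω (Fin.ext (by simp only; omega))

theorem occursAt.length_le {p n s : ℕ} {η : Fin p → Letter} {ω : Fin n → Letter}
    (h : occursAt η ω s) : p ≤ n :=
  (Nat.le_add_left p s).trans h.1

/-- Only levels `k ≤ K` can occur in a string of length `2ℓ_K - 1`; the lower ones are already
excluded by the third clause of `F_K`, so admissibility reduces to avoiding `F_K` itself. -/
theorem mem_Padm_iff_notMem_Forb {ℓ : ℕ → ℕ} (r : ℕ → ℚ)
    (hℓ : ∀ k, 1 ≤ k → ℓ k < ℓ (k + 1)) {K : ℕ} (hK : 1 ≤ K) (ω : Fin (2 * ℓ K - 1) → Letter) :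
    ω ∈ Padm ℓ r (K % 2) (ℓ K) ↔ ω ∉ Forb ℓ r K := by
  simp only [Padm, Finset.mem_filter, Finset.mem_univ, true_and]
  refine ⟨fun h hω => h K hK rfl ω hω (occursIn_self ω), ?_⟩
  rintro hω k hk hpar η hη ⟨s, hocc⟩
  rcases lt_trichotomy k K with hlt | rfl | hgt
  · exact hω (Forb.mem_of_occursIn_lower hk hlt hpar hη
      (Forb.forall_ne_bad_of_notMem hω) ⟨s, hocc⟩)
  · exact hω (hocc.eq ▸ hη)
  · have := Nat.rel_of_forall_rel_succ_of_le_of_lt (· < ·) hℓ hK hgt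
    have := hocc.length_le
    omega

theorem bad_two_mul_sub_one {m : ℕ} (hm : 1 ≤ m) : bad (2 * m - 1) = Letter.neg := by
  simp only [bad, if_pos (show (2 * m - 1) % 2 = 1 by omega)]

theorem bad_two_mul (m : ℕ) : bad (2 * m) = Letter.pos := by
  simp [bad]

theorem admissible_eq_complement_forbidden_general (ℓ : ℕ → ℕ) (r : ℕ → ℚ)
    (hlmono : ∀ k, 1 ≤ k → ℓ k < ℓ (k + 1)) :
    ∀ m, 1 ≤ m →
      (∀ ω : Fin (2 * ℓ (2 * m - 1) - 1) → Letter,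
        ω ∈ Padm ℓ r 1 (ℓ (2 * m - 1)) ↔
          ((∀ i, ω i ≠ Letter.neg) ∧ ω ∉ Forb ℓ r (2 * m - 1))) ∧
      (∀ ω : Fin (2 * ℓ (2 * m) - 1) → Letter,
        ω ∈ Padm ℓ r 0 (ℓ (2 * m)) ↔
          ((∀ i, ω i ≠ Letter.pos) ∧ ω ∉ Forb ℓ r (2 * m))) := by
  intro m hm
  constructor
  · intro ω
    have h := mem_Padm_iff_notMem_Forb r hlmono (K := 2 * m - 1) (by omega) ω
    rw [show (2 * m - 1) % 2 = 1 by omega] at h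
    rw [h, ← bad_two_mul_sub_one hm]
    exact ⟨fun hω => ⟨Forb.forall_ne_bad_of_notMem hω, hω⟩, And.right⟩
  · intro ω
    have h := mem_Padm_iff_notMem_Forb r hlmono (K := 2 * m) (by omega) ω
    rw [Nat.mul_mod_right] at h
    rw [h, ← bad_two_mul m]
    exact ⟨fun hω => ⟨Forb.forall_ne_bad_of_notMem hω, hω⟩, And.right⟩

theorem admissible_eq_complement_forbidden (ℓ : ℕ → ℕ) (r : ℕ → ℚ)
    (hl1 : ℓ 1 = 4) (hlmono : ∀ k, 1 ≤ k → ℓ k < ℓ (k + 1))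
    (hr1 : r 1 = 1 / 2) (hrpos : ∀ k, 1 ≤ k → 0 < r k) (hrhalf : ∀ k, 1 ≤ k → r k ≤ 1 / 2) :
    ∀ m, 1 ≤ m →
      (∀ ω : Fin (2 * ℓ (2 * m - 1) - 1) → Letter,
        ω ∈ Padm ℓ r 1 (ℓ (2 * m - 1)) ↔
          ((∀ i, ω i ≠ Letter.neg) ∧ ω ∉ Forb ℓ r (2 * m - 1))) ∧
      (∀ ω : Fin (2 * ℓ (2 * m) - 1) → Letter,
        ω ∈ Padm ℓ r 0 (ℓ (2 * m)) ↔
          ((∀ i, ω i ≠ Letter.pos) ∧ ω ∉ Forb ℓ r (2 * m))) :=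
  admissible_eq_complement_forbidden_general ℓ r hlmono
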